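/- arXiv:2303.15558 — 3 statements merged into one kernel-verified Lean document; each statement's English description precedes it below -/
import Mathlib

section
/- Let c : {1,...,T} × P → ℝ and α ≥ 0. For 1 ≤ t₁ ≤ t₂ ≤ T define p(t₁,t₂) ∈ P to be a path minimizing ∑_{t=t₁}^{t₂} c(t, p) over p ∈ P_{t₁..t₂} (the paths admissible at all steps t₁,...,t₂). Then there exists an optimal path-sequence (minimizing ∑_t c(t,p_t) + α·#{path changes}) in which, on every maximal interval [t₁, t₂] where the same path is used, the path used equals some p(t₁,t₂); in particular the restricted path sets P̂_t = {p(t₁,t₂) : t₁ ≤ t ≤ t₂} contain an optimal path-sequence. -/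
/-- The time step preceding `t` (clamped at 0). -/
def fpred {T : ℕ} (t : Fin T) : Fin T :=
  ⟨t.1 - 1, lt_of_le_of_lt (Nat.sub_le _ _) t.2⟩

/-- Number of path changes of a path-sequence `s`: indices `t ≥ 1` with `s t ≠ s (t-1)`. -/
def numChanges {P : Type*} [DecidableEq P] {T : ℕ} (s : Fin T → P) : ℕ :=
  (Finset.univ.filter (fun t : Fin T => 0 < t.1 ∧ s t ≠ s (fpred t))).card

/-- `N(x) = ∑_{t ≥ 1} ∑_p max 0 (x t p - x (t-1) p)`. -/
noncomputable def pathChangeCost {P : Type*} [Fintype P] {T : ℕ} (x : Fin T → P → ℝ) : ℝ :=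
  ∑ t : Fin T, ∑ p : P, if 0 < t.1 then max 0 (x t p - x (fpred t) p) else 0

theorem stmt6 {P : Type*} [Fintype P] [DecidableEq P] {T : ℕ}
    (adm : Fin T → Finset P) (hadm : ∀ t, (adm t).Nonempty)
    (c : Fin T → P → ℝ) (α : ℝ) (hα : 0 ≤ α) :
    ∃ s : Fin T → P,
      (∀ t, s t ∈ adm t) ∧
      (∀ s' : Fin T → P, (∀ t, s' t ∈ adm t) →
        (∑ t, c t (s t)) + α * (numChanges s : ℝ) ≤
          (∑ t, c t (s' t)) + α * (numChanges s' : ℝ)) ∧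
      (∀ t1 t2 : Fin T, t1 ≤ t2 →
        (∀ t ∈ Finset.Icc t1 t2, s t = s t1) →
        (0 < t1.1 → s (fpred t1) ≠ s t1) →
        (∀ h : t2.1 + 1 < T, s ⟨t2.1 + 1, h⟩ ≠ s t2) →
        ∀ q : P, (∀ t ∈ Finset.Icc t1 t2, q ∈ adm t) →
          ∑ t ∈ Finset.Icc t1 t2, c t (s t1) ≤ ∑ t ∈ Finset.Icc t1 t2, c t q) := by
  classical
  obtain ⟨s, hsmem, hmin⟩ := Finset.exists_min_image
    (Finset.univ.filter (fun s : Fin T → P => ∀ t, s t ∈ adm t))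
    (fun s => (∑ t, c t (s t)) + α * (numChanges s : ℝ))
    ⟨fun t => (hadm t).choose, by
      simp only [Finset.mem_filter, Finset.mem_univ, true_and]
      exact fun t => (hadm t).choose_spec⟩
  simp only [Finset.mem_filter, Finset.mem_univ, true_and] at hsmem
  refine ⟨s, hsmem, ?_, ?_⟩
  · intro s' hs'
    exact hmin s' (by simp only [Finset.mem_filter, Finset.mem_univ, true_and]; exact hs')
  · intro t1 t2 h12 hconst hleft hright q hq
    by_contra hlt
    push_neg at hlt
    set s'' : Fin T → P := fun t => if t ∈ Finset.Icc t1 t2 then q else s t with hs''def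
    have hadm'' : ∀ t, s'' t ∈ adm t := by
      intro t
      simp only [hs''def]
      split
      · exact hq t ‹_›
      · exact hsmem t
    -- the change indices of s'' are a subset of those of s
    have hchsub : (Finset.univ.filter (fun t : Fin T => 0 < t.1 ∧ s'' t ≠ s'' (fpred t)))
        ⊆ (Finset.univ.filter (fun t : Fin T => 0 < t.1 ∧ s t ≠ s (fpred t))) := by
      intro t ht
      simp only [Finset.mem_filter, Finset.mem_univ, true_and] at ht ⊢
      obtain ⟨hpos, hne⟩ := ht
      refine ⟨hpos, ?_⟩
      by_cases htI : t ∈ Finset.Icc t1 t2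
      · by_cases hpI : fpred t ∈ Finset.Icc t1 t2
        · exact absurd (by simp only [hs''def, if_pos htI, if_pos hpI]) hne
        · -- t = t1 and t1 > 0
          have h1 : t1 ≤ t ∧ t ≤ t2 := Finset.mem_Icc.mp htI
          have hp2 : fpred t ≤ t2 := le_trans (by
            show (fpred t).1 ≤ t.1; exact Nat.sub_le _ _) h1.2
          have hp1 : ¬ t1 ≤ fpred t := fun h => hpI (Finset.mem_Icc.mpr ⟨h, hp2⟩)
          have hlt1 : t.1 - 1 < t1.1 := lt_of_not_ge hp1
          have hge : t1.1 ≤ t.1 := h1.1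
          have heq : t = t1 := Fin.ext (by omega)
          rw [heq]
          exact (hleft (heq ▸ hpos)).symm
      · by_cases hpI : fpred t ∈ Finset.Icc t1 t2
        · -- t = t2 + 1
          have h1 : t1 ≤ fpred t ∧ fpred t ≤ t2 := Finset.mem_Icc.mp hpI
          have ht1t : t1 ≤ t := le_trans h1.1 (by
            show (fpred t).1 ≤ t.1; exact Nat.sub_le _ _)
          have ht2t : ¬ t ≤ t2 := fun h => htI (Finset.mem_Icc.mpr ⟨ht1t, h⟩)
          have h2lt : t2.1 < t.1 := lt_of_not_ge ht2t
          have hval : t.1 = t2.1 + 1 := by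
            have := h1.2
            have : t.1 - 1 ≤ t2.1 := this
            omega
          have hT : t2.1 + 1 < T := hval ▸ t.2
          have hteq : t = ⟨t2.1 + 1, hT⟩ := Fin.ext hval
          have hfp : fpred t = t2 := by
            apply Fin.ext
            show t.1 - 1 = t2.1
            omega
          rw [hfp, hteq]
          exact hright hT
        · simpa only [hs''def, if_neg htI, if_neg hpI] using hne
    have hNle : numChanges s'' ≤ numChanges s := Finset.card_le_card hchsub
    -- cost comparison
    have hcost : ∑ t, c t (s'' t) < ∑ t, c t (s t) := by
      rw [← Finset.sum_add_sum_compl (Finset.Icc t1 t2) (fun t => c t (s'' t)),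
          ← Finset.sum_add_sum_compl (Finset.Icc t1 t2) (fun t => c t (s t))]
      have h1 : ∑ t ∈ Finset.Icc t1 t2, c t (s'' t) = ∑ t ∈ Finset.Icc t1 t2, c t q :=
        Finset.sum_congr rfl (fun t htm => by simp only [hs''def, if_pos htm])
      have h2 : ∑ t ∈ Finset.Icc t1 t2, c t (s t) = ∑ t ∈ Finset.Icc t1 t2, c t (s t1) :=
        Finset.sum_congr rfl (fun t htm => by rw [hconst t htm])
      have h3 : ∑ t ∈ (Finset.Icc t1 t2)ᶜ, c t (s'' t)
          = ∑ t ∈ (Finset.Icc t1 t2)ᶜ, c t (s t) :=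
        Finset.sum_congr rfl (fun t htm => by
          simp only [hs''def, if_neg (Finset.mem_compl.mp htm)])
      rw [h1, h2, h3]
      linarith
    have hobj := hmin s'' (by
      simp only [Finset.mem_filter, Finset.mem_univ, true_and]; exact hadm'')
    have hαN : α * (numChanges s'' : ℝ) ≤ α * (numChanges s : ℝ) :=
      mul_le_mul_of_nonneg_left (by exact_mod_cast hNle) hα
    linarith
end

section
/- Let V(t) for t ∈ {1,...,T+1} be defined by the recursion V(T+1) = 0 and V(t) = min_{t ≤ t' ≤ T} [ C(t, t') + (if t' < T then α else 0) + V(t'+1) ], where C(t,t') = min_{p ∈ P_{t..t'}} ∑_{u=t}^{t'} c(u,p) is the cost of the best single path usable on time steps t through t'. Then V(1) equals the minimum over all path-sequences (p_1,...,p_T) of ∑_t c(t,p_t) + α·#{t ∈ {2,...,T} : p_t ≠ p_{t−1}}, where at each step t the chosen path must lie in the admissible set of step t. -/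
private lemma myconst {P : Type*} (s : ℕ → P) (t m : ℕ)
    (h : ∀ v, t < v → v ≤ m → s v = s (v - 1)) :
    ∀ u, t ≤ u → u ≤ m → s u = s t := by
  intro u
  induction u using Nat.strong_induction_on with
  | _ u IHu =>
    intro h1 h2
    rcases eq_or_lt_of_le h1 with rfl | h1'
    · rfl
    · rw [h u h1' h2]
      exact IHu (u - 1) (by omega) (by omega) (by omega)

theorem stmt7 {P : Type*} [Fintype P] [DecidableEq P] (T : ℕ) (hT : 1 ≤ T)
    (adm : ℕ → Finset P) (c : ℕ → P → ℝ) (α : ℝ) (hα : 0 ≤ α)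
    (V : ℕ → ℝ) (hVT : V T = 0)
    (hVrec : ∀ t < T, IsLeast {r : ℝ | ∃ t', t ≤ t' ∧ t' < T ∧ ∃ p : P,
        (∀ u, t ≤ u → u ≤ t' → p ∈ adm u) ∧
        r = (∑ u ∈ Finset.Icc t t', c u p) + (if t' + 1 < T then α else 0) + V (t' + 1)}
      (V t)) :
    IsLeast {r : ℝ | ∃ s : ℕ → P, (∀ t < T, s t ∈ adm t) ∧
        r = (∑ t ∈ Finset.range T, c t (s t)) +
          α * (((Finset.Ico 1 T).filter (fun t => s t ≠ s (t - 1))).card : ℝ)}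
      (V 0) := by
  obtain ⟨t₀, -, -, p₀, -, -⟩ := (hVrec 0 hT).1
  suffices h : ∀ d t, T - t = d → t ≤ T → IsLeast {r : ℝ | ∃ s : ℕ → P,
      (∀ u, t ≤ u → u < T → s u ∈ adm u) ∧
      r = (∑ u ∈ Finset.Ico t T, c u (s u)) +
        α * (((Finset.Ico (t+1) T).filter (fun u => s u ≠ s (u - 1))).card : ℝ)} (V t) by
    have h0 := h T 0 (by omega) (by omega)
    constructor
    · obtain ⟨s, hs1, hs2⟩ := h0.1
      refine ⟨s, fun u hu => hs1 u (Nat.zero_le u) hu, ?_⟩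
      rw [Finset.range_eq_Ico]; exact hs2
    · rintro r ⟨s, hs1, hs2⟩
      refine h0.2 ⟨s, fun u _ hu => hs1 u hu, ?_⟩
      rw [Finset.range_eq_Ico] at hs2; exact hs2
  intro d
  induction d using Nat.strong_induction_on with
  | _ d IH =>
    intro t hd ht
    rcases eq_or_lt_of_le ht with rfl | htT
    · -- base case t = T
      constructor
      · refine ⟨fun _ => p₀, fun u h1 h2 => absurd h1 (by omega), ?_⟩
        have e1 : Finset.Ico t t = (∅ : Finset ℕ) := Finset.Ico_self t
        have e2 : Finset.Ico (t+1) t = (∅ : Finset ℕ) := Finset.Ico_eq_empty (by omega)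
        rw [hVT, e1, e2]; simp
      · rintro r ⟨s, -, hr⟩
        have e1 : Finset.Ico t t = (∅ : Finset ℕ) := Finset.Ico_self t
        have e2 : Finset.Ico (t+1) t = (∅ : Finset ℕ) := Finset.Ico_eq_empty (by omega)
        rw [e1, e2] at hr; simp at hr
        rw [hVT, hr]
    · -- inductive case t < T
      -- lower bound
      have lb : ∀ (s : ℕ → P), (∀ u, t ≤ u → u < T → s u ∈ adm u) →
          V t ≤ (∑ u ∈ Finset.Ico t T, c u (s u)) +
            α * (((Finset.Ico (t+1) T).filter (fun u => s u ≠ s (u - 1))).card : ℝ) := by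
        intro s hadm
        by_cases hS : ((Finset.Ico (t+1) T).filter (fun u => s u ≠ s (u - 1))).Nonempty
        · set F := (Finset.Ico (t+1) T).filter (fun u => s u ≠ s (u - 1)) with hF
          set m := F.min' hS with hm
          have hmF : m ∈ F := Finset.min'_mem _ _
          rw [hF, Finset.mem_filter, Finset.mem_Ico] at hmF
          have hmin : ∀ v, t < v → v < m → s v = s (v - 1) := by
            intro v hv1 hv2
            by_contra hne
            have hvF : v ∈ F := by
              rw [hF, Finset.mem_filter, Finset.mem_Ico]
              exact ⟨⟨by omega, by omega⟩, hne⟩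
            have := Finset.min'_le F v hvF
            omega
          have hconst : ∀ u, t ≤ u → u ≤ m - 1 → s u = s t :=
            myconst s t (m - 1) (fun v h1 h2 => hmin v h1 (by omega))
          have h1 : V t ≤ (∑ u ∈ Finset.Icc t (m-1), c u (s t)) +
              (if m - 1 + 1 < T then α else 0) + V (m - 1 + 1) := by
            refine (hVrec t htT).2 ⟨m - 1, by omega, by omega, s t, ?_, rfl⟩
            intro u hu1 hu2
            rw [← hconst u hu1 hu2]
            exact hadm u hu1 (by omega)
          have hm1 : m - 1 + 1 = m := by omega
          rw [hm1, if_pos (by omega : m < T)] at h1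
          have hIH := IH (T - m) (by omega) m rfl (by omega)
          have h2 : V m ≤ (∑ u ∈ Finset.Ico m T, c u (s u)) +
              α * (((Finset.Ico (m+1) T).filter (fun u => s u ≠ s (u - 1))).card : ℝ) :=
            hIH.2 ⟨s, fun u hu1 hu2 => hadm u (by omega) hu2, rfl⟩
          have hsum : (∑ u ∈ Finset.Ico t T, c u (s u)) =
              (∑ u ∈ Finset.Ico t m, c u (s u)) + ∑ u ∈ Finset.Ico m T, c u (s u) :=
            (Finset.sum_Ico_consecutive _ (by omega) (by omega)).symm
          have heq : Finset.Icc t (m-1) = Finset.Ico t m := by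
            ext x; simp only [Finset.mem_Icc, Finset.mem_Ico]; omega
          have hheads : (∑ u ∈ Finset.Icc t (m-1), c u (s t)) =
              ∑ u ∈ Finset.Ico t m, c u (s u) := by
            rw [heq]
            refine Finset.sum_congr rfl (fun u hu => ?_)
            simp only [Finset.mem_Ico] at hu
            rw [hconst u hu.1 (by omega)]
          have hcard : (((Finset.Ico (m+1) T).filter (fun u => s u ≠ s (u - 1))).card) + 1 ≤
              ((Finset.Ico (t+1) T).filter (fun u => s u ≠ s (u - 1))).card := by
            have hsub : insert m ((Finset.Ico (m+1) T).filter (fun u => s u ≠ s (u - 1))) ⊆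
                (Finset.Ico (t+1) T).filter (fun u => s u ≠ s (u - 1)) := by
              intro v hv
              rcases Finset.mem_insert.mp hv with rfl | hv
              · exact Finset.mem_filter.mpr ⟨Finset.mem_Ico.mpr ⟨by omega, by omega⟩, hmF.2⟩
              · simp only [Finset.mem_filter, Finset.mem_Ico] at hv ⊢
                exact ⟨⟨by omega, hv.1.2⟩, hv.2⟩
            have hni : m ∉ (Finset.Ico (m+1) T).filter (fun u => s u ≠ s (u - 1)) := by
              intro hmem
              exact absurd (Finset.mem_Ico.mp (Finset.mem_filter.mp hmem).1).1 (by omega)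
            have hcc := Finset.card_le_card hsub
            rwa [Finset.card_insert_of_notMem hni] at hcc
          have hcast : (((Finset.Ico (m+1) T).filter (fun u => s u ≠ s (u - 1))).card : ℝ) + 1 ≤
              (((Finset.Ico (t+1) T).filter (fun u => s u ≠ s (u - 1))).card : ℝ) := by
            exact_mod_cast hcard
          have hmul := mul_le_mul_of_nonneg_left hcast hα
          have hring : α * ((((Finset.Ico (m+1) T).filter (fun u => s u ≠ s (u - 1))).card : ℝ) + 1)
              = α * (((Finset.Ico (m+1) T).filter (fun u => s u ≠ s (u - 1))).card : ℝ) + α := by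
            ring
          rw [hring] at hmul
          linarith
        · rw [Finset.not_nonempty_iff_eq_empty] at hS
          have hno : ∀ v, t < v → v ≤ T - 1 → s v = s (v - 1) := by
            intro v h1 h2
            by_contra hne
            have : v ∈ (Finset.Ico (t+1) T).filter (fun u => s u ≠ s (u - 1)) :=
              Finset.mem_filter.mpr ⟨Finset.mem_Ico.mpr ⟨by omega, by omega⟩, hne⟩
            rw [hS] at this
            exact absurd this (Finset.notMem_empty v)
          have hconst : ∀ u, t ≤ u → u ≤ T - 1 → s u = s t := myconst s t (T-1) hno
          have h1 : V t ≤ (∑ u ∈ Finset.Icc t (T-1), c u (s t)) +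
              (if T - 1 + 1 < T then α else 0) + V (T - 1 + 1) := by
            refine (hVrec t htT).2 ⟨T - 1, by omega, by omega, s t, ?_, rfl⟩
            intro u hu1 hu2
            rw [← hconst u hu1 hu2]
            exact hadm u hu1 (by omega)
          have hm1 : T - 1 + 1 = T := by omega
          rw [hm1, if_neg (by omega : ¬ T < T), hVT] at h1
          have heq : Finset.Icc t (T-1) = Finset.Ico t T := by
            ext x; simp only [Finset.mem_Icc, Finset.mem_Ico]; omega
          have hheads : (∑ u ∈ Finset.Icc t (T-1), c u (s t)) =
              ∑ u ∈ Finset.Ico t T, c u (s u) := by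
            rw [heq]
            refine Finset.sum_congr rfl (fun u hu => ?_)
            simp only [Finset.mem_Ico] at hu
            rw [hconst u hu.1 (by omega)]
          rw [hS]
          simp only [Finset.card_empty, Nat.cast_zero, mul_zero, add_zero]
          linarith
      -- membership
      obtain ⟨t', ht'1, ht'2, p, hpadm, hVt⟩ := (hVrec t htT).1
      have hIH := IH (T - (t'+1)) (by omega) (t'+1) rfl (by omega)
      obtain ⟨s', hs'adm, hVsucc⟩ := hIH.1
      set s : ℕ → P := fun u => if u ≤ t' then p else s' u with hsdef
      have hsp : ∀ u, u ≤ t' → s u = p := fun u hu => by simp only [hsdef, if_pos hu]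
      have hss' : ∀ u, t' < u → s u = s' u := fun u hu => by
        simp only [hsdef, if_neg (by omega : ¬ u ≤ t')]
      have hsadm : ∀ u, t ≤ u → u < T → s u ∈ adm u := by
        intro u h1 h2
        by_cases h : u ≤ t'
        · rw [hsp u h]; exact hpadm u h1 h
        · rw [hss' u (by omega)]; exact hs'adm u (by omega) h2
      have hsum : (∑ u ∈ Finset.Ico t T, c u (s u)) =
          (∑ u ∈ Finset.Icc t t', c u p) + ∑ u ∈ Finset.Ico (t'+1) T, c u (s' u) := by
        rw [← Finset.sum_Ico_consecutive (fun u => c u (s u)) (by omega : t ≤ t' + 1)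
          (by omega : t' + 1 ≤ T)]
        congr 1
        · have heq : Finset.Ico t (t'+1) = Finset.Icc t t' := by
            ext x; simp only [Finset.mem_Icc, Finset.mem_Ico]; omega
          rw [heq]
          exact Finset.sum_congr rfl (fun u hu => by
            rw [hsp u (Finset.mem_Icc.mp hu).2])
        · exact Finset.sum_congr rfl (fun u hu => by
            have h := (Finset.mem_Ico.mp hu).1
            rw [hss' u (by omega)])
      have hle : (∑ u ∈ Finset.Ico t T, c u (s u)) +
          α * (((Finset.Ico (t+1) T).filter (fun u => s u ≠ s (u - 1))).card : ℝ) ≤ V t := by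
        by_cases h' : t' + 1 < T
        · -- change possibly at t'+1
          have hsub : (Finset.Ico (t+1) T).filter (fun u => s u ≠ s (u - 1)) ⊆
              insert (t'+1) ((Finset.Ico (t'+2) T).filter (fun u => s' u ≠ s' (u - 1))) := by
            intro v hv
            obtain ⟨hv1, hv2⟩ := Finset.mem_filter.mp hv
            obtain ⟨hv3, hv4⟩ := Finset.mem_Ico.mp hv1
            by_cases hc1 : v ≤ t'
            · exact absurd (by rw [hsp v hc1, hsp (v-1) (by omega)]) hv2
            · by_cases hc2 : v = t' + 1
              · rw [hc2]; exact Finset.mem_insert_self _ _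
              · refine Finset.mem_insert_of_mem (Finset.mem_filter.mpr
                  ⟨Finset.mem_Ico.mpr ⟨by omega, hv4⟩, ?_⟩)
                rwa [hss' v (by omega), hss' (v-1) (by omega)] at hv2
          have hcard : ((Finset.Ico (t+1) T).filter (fun u => s u ≠ s (u - 1))).card ≤
              ((Finset.Ico (t'+2) T).filter (fun u => s' u ≠ s' (u - 1))).card + 1 :=
            le_trans (Finset.card_le_card hsub) (Finset.card_insert_le _ _)
          have hcast : (((Finset.Ico (t+1) T).filter (fun u => s u ≠ s (u - 1))).card : ℝ) ≤
              (((Finset.Ico (t'+2) T).filter (fun u => s' u ≠ s' (u - 1))).card : ℝ) + 1 := by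
            exact_mod_cast hcard
          have hmul := mul_le_mul_of_nonneg_left hcast hα
          rw [if_pos h'] at hVt
          have he2 : Finset.Ico (t'+1+1) T = Finset.Ico (t'+2) T := by norm_num
          rw [he2] at hVsucc
          rw [hVt, hVsucc, hsum]
          nlinarith [hmul]
        · -- t' = T - 1 : no change at all
          have ht'T : t' = T - 1 := by omega
          have hempty : (Finset.Ico (t+1) T).filter (fun u => s u ≠ s (u - 1)) = ∅ := by
            rw [Finset.filter_eq_empty_iff]
            intro v hv
            obtain ⟨hv1, hv2⟩ := Finset.mem_Ico.mp hv
            simp only [ne_eq, not_not]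
            rw [hsp v (by omega), hsp (v-1) (by omega)]
          have he1 : Finset.Ico (t'+1) T = (∅ : Finset ℕ) := Finset.Ico_eq_empty (by omega)
          have he2 : Finset.Ico (t'+1+1) T = (∅ : Finset ℕ) := Finset.Ico_eq_empty (by omega)
          rw [he1, he2] at hVsucc
          simp only [Finset.sum_empty, Finset.filter_empty, Finset.card_empty,
            Nat.cast_zero, mul_zero, add_zero, zero_add] at hVsucc
          rw [if_neg h'] at hVt
          rw [hempty, hsum, he1]
          simp only [Finset.sum_empty, Finset.card_empty, Nat.cast_zero, mul_zero, add_zero]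
          linarith
      have heqV : (∑ u ∈ Finset.Ico t T, c u (s u)) +
          α * (((Finset.Ico (t+1) T).filter (fun u => s u ≠ s (u - 1))).card : ℝ) = V t :=
        le_antisymm hle (lb s hsadm)
      exact ⟨⟨s, hsadm, heqV.symm⟩, fun r hr => by
        obtain ⟨s₁, h1, h2⟩ := hr
        rw [h2]; exact lb s₁ h1⟩
end

section
/- Let Q₁ be the polyhedron of points (x, n) with x_{pt} ∈ [0,1], n_{pt} ≥ 0, satisfying ∑_{p ∈ P_t} x_{pt} = 1 for every time step t and x_{pt} − x_{p,t−1} ≤ n_{pt} for every p and t ≥ 2 (for a single commodity). Then every vertex-minimal feasible choice of n given x is n_{pt} = max(0, x_{pt} − x_{p,t−1}), and Q₁ equals the convex hull of its integer points, i.e., the convex hull of points corresponding to path-sequences (where for each t, x_{pt} = 1 for exactly one p, and n_{pt} records path changes). -/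
set_option linter.unusedSectionVars false
set_option maxHeartbeats 1000000

open scoped Pointwise

/-- The polyhedron `Q₁` for a single commodity: points `(x, n)` with `x t p ∈ [0,1]`,
`n t p ≥ 0`, `∑_p x t p = 1` for each time step `t`, and
`x t p - x (t-1) p ≤ n t p` for each `p` and `t ≥ 1`. -/
def Q1 (P : Type*) [Fintype P] (T : ℕ) :
    Set ((Fin T → P → ℝ) × (Fin T → P → ℝ)) :=
  {z | (∀ t p, 0 ≤ z.1 t p ∧ z.1 t p ≤ 1) ∧
       (∀ t p, 0 ≤ z.2 t p) ∧
       (∀ t, ∑ p, z.1 t p = 1) ∧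
       (∀ (t : Fin T) (p : P), 0 < t.1 → z.1 t p - z.1 (fpred t) p ≤ z.2 t p)}

lemma fin_mk_eq {n a : ℕ} (t : Fin n) (h : a < n) (hv : a = t.1) :
    (⟨a, h⟩ : Fin n) = t := Fin.ext hv


section Coupling
variable {P : Type*} [Fintype P] [DecidableEq P]

/-- Maximal-diagonal coupling of two probability vectors. -/
noncomputable def gam (a b : P → ℝ) (p q : P) : ℝ :=
  if p = q then min (a p) (b p)
  else (max 0 (a p - b p)) * (max 0 (b q - a q)) / (∑ r, max 0 (a r - b r))

lemma gam_nonneg {a b : P → ℝ} (ha0 : ∀ p, 0 ≤ a p) (hb0 : ∀ p, 0 ≤ b p) (p q : P) :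
    0 ≤ gam a b p q := by
  unfold gam
  split
  · exact le_min (ha0 p) (hb0 p)
  · apply div_nonneg (mul_nonneg (le_max_left _ _) (le_max_left _ _))
    exact Finset.sum_nonneg fun r _ => le_max_left _ _

lemma Dsym {a b : P → ℝ} (ha1 : ∑ p, a p = 1) (hb1 : ∑ p, b p = 1) :
    ∑ r, max 0 (a r - b r) = ∑ r, max 0 (b r - a r) := by
  have h : ∀ r : P, max 0 (a r - b r) - max 0 (b r - a r) = a r - b r := by
    intro r
    rcases le_total (a r) (b r) with h | h
    · rw [max_eq_left (by linarith), max_eq_right (by linarith)]; ring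
    · rw [max_eq_right (by linarith), max_eq_left (by linarith)]; ring
  have h2 := Finset.sum_congr rfl (fun r (_ : r ∈ Finset.univ) => h r)
  rw [Finset.sum_sub_distrib, Finset.sum_sub_distrib, ha1, hb1] at h2
  linarith

lemma gam_row {a b : P → ℝ} (ha1 : ∑ p, a p = 1) (hb1 : ∑ p, b p = 1) (p : P) :
    ∑ q, gam a b p q = a p := by
  classical
  set D := ∑ r, max 0 (a r - b r) with hD
  rw [← Finset.sum_erase_add _ _ (Finset.mem_univ p)]
  have hdiag : gam a b p p = min (a p) (b p) := by unfold gam; simp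
  have hoff : ∀ q ∈ Finset.univ.erase p, gam a b p q
      = (max 0 (a p - b p)) * (max 0 (b q - a q)) / D := by
    intro q hq
    have : p ≠ q := fun h => (Finset.mem_erase.mp hq).1 h.symm
    unfold gam; rw [if_neg this]
  rw [Finset.sum_congr rfl hoff, hdiag]
  rcases lt_or_ge (b p) (a p) with h | h
  · have hmax : max 0 (a p - b p) = a p - b p := max_eq_right (by linarith)
    have hzero : max 0 (b p - a p) = 0 := max_eq_left (by linarith)
    have hDalt : D = ∑ r, max 0 (b r - a r) := Dsym ha1 hb1
    have hsum : ∑ q ∈ Finset.univ.erase p, max 0 (b q - a q) = D := by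
      rw [hDalt, ← Finset.sum_erase_add _ _ (Finset.mem_univ p), hzero, add_zero]
    have hDpos : 0 < D := by
      have h1 : (0:ℝ) < max 0 (a p - b p) := by rw [hmax]; linarith
      calc (0:ℝ) < max 0 (a p - b p) := h1
        _ ≤ ∑ r, max 0 (a r - b r) :=
          Finset.single_le_sum (f := fun r => max 0 (a r - b r))
            (fun r _ => le_max_left _ _) (Finset.mem_univ p)
    rw [← Finset.sum_div, ← Finset.mul_sum, hsum, mul_div_assoc,
      div_self (ne_of_gt hDpos), mul_one, hmax, min_eq_right (le_of_lt h)]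
    ring
  · have hz : max 0 (a p - b p) = 0 := max_eq_left (by linarith)
    simp [hz, min_eq_left h]

lemma gam_swap {a b : P → ℝ} (ha1 : ∑ p, a p = 1) (hb1 : ∑ p, b p = 1) (p q : P) :
    gam a b p q = gam b a q p := by
  unfold gam
  rcases eq_or_ne p q with h | h
  · subst h; simp [min_comm]
  · rw [if_neg h, if_neg (Ne.symm h), Dsym ha1 hb1]; ring

lemma gam_col {a b : P → ℝ} (ha1 : ∑ p, a p = 1) (hb1 : ∑ p, b p = 1) (q : P) :
    ∑ p, gam a b p q = b q := by
  rw [Finset.sum_congr rfl (fun p _ => gam_swap ha1 hb1 p q)]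
  exact gam_row hb1 ha1 q

lemma gam_zero_of_row {a b : P → ℝ} (ha0 : ∀ p, 0 ≤ a p) (hb0 : ∀ p, 0 ≤ b p)
    (ha1 : ∑ p, a p = 1) (hb1 : ∑ p, b p = 1) {p : P} (hp : a p = 0) (q : P) :
    gam a b p q = 0 := by
  have h1 : ∑ q, gam a b p q = 0 := by rw [gam_row ha1 hb1 p, hp]
  exact (Finset.sum_eq_zero_iff_of_nonneg
    (fun q _ => gam_nonneg ha0 hb0 p q)).mp h1 q (Finset.mem_univ q)

end Coupling

section Markov
variable {P : Type*} [Fintype P] [DecidableEq P]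

/-- Markov-chain measure with marginals `X k` and maximal-diagonal couplings. -/
noncomputable def mu (X : ℕ → P → ℝ) : (k : ℕ) → (Fin (k+1) → P) → ℝ
  | 0, s => X 0 (s 0)
  | (k+1), s =>
      mu X k (Fin.init s) *
        (gam (X k) (X (k+1)) (s (Fin.castSucc (Fin.last k))) (s (Fin.last (k+1)))
          / X k (s (Fin.castSucc (Fin.last k))))

variable {X : ℕ → P → ℝ} (hX0 : ∀ k p, 0 ≤ X k p) (hX1 : ∀ k, ∑ p, X k p = 1)
include hX0 hX1

omit hX1 in
lemma mu_nonneg (k : ℕ) (s : Fin (k+1) → P) : 0 ≤ mu X k s := by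
  induction k with
  | zero => exact hX0 0 _
  | succ k ih =>
      exact mul_nonneg (ih _) (div_nonneg
        (gam_nonneg (hX0 k) (hX0 (k+1)) _ _) (hX0 k _))

/-- `Fin.snoc` as an equiv on non-dependent tuples. -/
def snocE (Q : Type*) (k : ℕ) : ((Fin (k+1) → Q) × Q) ≃ (Fin (k+2) → Q) where
  toFun sq := Fin.snoc sq.1 sq.2
  invFun s := (Fin.init s, s (Fin.last _))
  left_inv := fun ⟨s, q⟩ => by simp
  right_inv := fun s => by simp

omit hX0 hX1 in
/-- Sum over `Fin (k+2) → P` as a double sum via `Fin.snoc`. -/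
lemma sum_snoc_eq {k : ℕ} (F : (Fin (k+2) → P) → ℝ) :
    ∑ s : Fin (k+2) → P, F s
      = ∑ s : Fin (k+1) → P, ∑ q : P, F (Fin.snoc s q) := by
  have h := Equiv.sum_comp (snocE P k) F
  rw [Fintype.sum_prod_type] at h
  rw [← h]
  rfl

omit hX0 hX1 in
lemma mu_snoc {k : ℕ} (s : Fin (k+1) → P) (q : P) :
    mu X (k+1) (Fin.snoc s q)
      = mu X k s * (gam (X k) (X (k+1)) (s (Fin.last k)) q / X k (s (Fin.last k))) := by
  simp only [mu, Fin.init_snoc, Fin.snoc_castSucc, Fin.snoc_last]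

/-- Marginal at the last coordinate. -/
lemma mu_last (k : ℕ) (p : P) :
    ∑ s : Fin (k+1) → P, (if s (Fin.last k) = p then mu X k s else 0) = X k p := by
  induction k generalizing p with
  | zero =>
      rw [← Equiv.sum_comp (Equiv.funUnique (Fin 1) P).symm
        (fun s : Fin 1 → P => if s (Fin.last 0) = p then mu X 0 s else 0)]
      have : ∀ r : P, (if ((Equiv.funUnique (Fin 1) P).symm r) (Fin.last 0) = p
          then mu X 0 ((Equiv.funUnique (Fin 1) P).symm r) else 0)
          = if r = p then X 0 r else 0 := fun r => rfl
      rw [Finset.sum_congr rfl fun r _ => this r, Finset.sum_ite_eq' Finset.univ p (X 0)]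
      simp
  | succ k ih =>
      rw [sum_snoc_eq]
      have hterm : ∀ s : Fin (k+1) → P,
          (∑ q : P, if (Fin.snoc s q : Fin (k+2) → P) (Fin.last (k+1)) = p
              then mu X (k+1) (Fin.snoc s q) else 0)
          = mu X k s * (gam (X k) (X (k+1)) (s (Fin.last k)) p / X k (s (Fin.last k))) := by
        intro s
        have : ∀ q : P, (if (Fin.snoc s q : Fin (k+2) → P) (Fin.last (k+1)) = p
              then mu X (k+1) (Fin.snoc s q) else 0)
            = if q = p then mu X k s *
                (gam (X k) (X (k+1)) (s (Fin.last k)) q / X k (s (Fin.last k))) else 0 := by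
          intro q
          rw [Fin.snoc_last, mu_snoc s q]
        rw [Finset.sum_congr rfl fun q _ => this q]
        rw [Finset.sum_ite_eq' Finset.univ p]
        simp
      rw [Finset.sum_congr rfl fun s _ => hterm s]
      -- group by the value of s (last k)
      have hgrp : ∀ s : Fin (k+1) → P,
          mu X k s * (gam (X k) (X (k+1)) (s (Fin.last k)) p / X k (s (Fin.last k)))
          = ∑ r : P, (if s (Fin.last k) = r then mu X k s else 0) *
              (gam (X k) (X (k+1)) r p / X k r) := by
        intro s
        rw [Finset.sum_eq_single (s (Fin.last k))]
        · simp
        · intro r _ hr; rw [if_neg (Ne.symm hr), zero_mul]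
        · intro h; exact absurd (Finset.mem_univ _) h
      rw [Finset.sum_congr rfl fun s _ => hgrp s, Finset.sum_comm]
      have hcol : ∀ r : P,
          ∑ s : Fin (k+1) → P, (if s (Fin.last k) = r then mu X k s else 0) *
              (gam (X k) (X (k+1)) r p / X k r)
          = gam (X k) (X (k+1)) r p := by
        intro r
        rw [← Finset.sum_mul, ih r]
        rcases eq_or_ne (X k r) 0 with h | h
        · rw [h, gam_zero_of_row (hX0 k) (hX0 (k+1)) (hX1 k) (hX1 (k+1)) h p]
          simp
        · field_simp
      rw [Finset.sum_congr rfl fun r _ => hcol r]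
      exact gam_col (hX1 k) (hX1 (k+1)) p

lemma mu_eq_zero {k : ℕ} {s : Fin (k+1) → P} (h : X k (s (Fin.last k)) = 0) :
    mu X k s = 0 := by
  have h1 : ∑ s' : Fin (k+1) → P,
      (if s' (Fin.last k) = s (Fin.last k) then mu X k s' else 0) = 0 := by
    rw [mu_last hX0 hX1 k _, h]
  have h2 := (Finset.sum_eq_zero_iff_of_nonneg (fun s' _ => by
    split
    · exact mu_nonneg hX0 k s'
    · exact le_refl 0)).mp h1 s (Finset.mem_univ s)
  simpa using h2

lemma mu_sum_snoc {k : ℕ} (s : Fin (k+1) → P) :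
    ∑ q : P, mu X (k+1) (Fin.snoc s q) = mu X k s := by
  have : ∀ q : P, mu X (k+1) (Fin.snoc s q)
      = mu X k s * (gam (X k) (X (k+1)) (s (Fin.last k)) q / X k (s (Fin.last k))) :=
    fun q => mu_snoc s q
  rw [Finset.sum_congr rfl fun q _ => this q, ← Finset.mul_sum, ← Finset.sum_div,
    gam_row (hX1 k) (hX1 (k+1))]
  rcases eq_or_ne (X k (s (Fin.last k))) 0 with h | h
  · rw [mu_eq_zero hX0 hX1 h]; simp
  · rw [div_self h, mul_one]


/-- Marginal at an arbitrary coordinate. -/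
lemma mu_marg (k : ℕ) : ∀ (i : ℕ) (hi : i ≤ k) (p : P),
    ∑ s : Fin (k+1) → P,
      (if s ⟨i, Nat.lt_succ_of_le hi⟩ = p then mu X k s else 0) = X i p := by
  induction k with
  | zero =>
      intro i hi p
      interval_cases i
      exact mu_last hX0 hX1 0 p
  | succ k ih =>
      intro i hi p
      rcases Nat.lt_or_ge i (k+1) with h | h
      · -- i ≤ k : truncate the last coordinate
        rw [sum_snoc_eq]
        have hterm : ∀ s : Fin (k+1) → P,
            (∑ q : P, if (Fin.snoc s q : Fin (k+2) → P) ⟨i, Nat.lt_succ_of_le hi⟩ = p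
                then mu X (k+1) (Fin.snoc s q) else 0)
            = (if s ⟨i, Nat.lt_succ_of_le (Nat.le_of_lt_succ h)⟩ = p then mu X k s else 0) := by
          intro s
          have hcast : ∀ q : P, (Fin.snoc s q : Fin (k+2) → P) ⟨i, Nat.lt_succ_of_le hi⟩
              = s ⟨i, Nat.lt_succ_of_le (Nat.le_of_lt_succ h)⟩ := by
            intro q
            have : (⟨i, Nat.lt_succ_of_le hi⟩ : Fin (k+2))
                = Fin.castSucc ⟨i, Nat.lt_succ_of_le (Nat.le_of_lt_succ h)⟩ := rfl
            rw [this, Fin.snoc_castSucc]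
          split
          · rename_i hsp
            have : ∀ q : P, (if (Fin.snoc s q : Fin (k+2) → P) ⟨i, Nat.lt_succ_of_le hi⟩ = p
                then mu X (k+1) (Fin.snoc s q) else 0) = mu X (k+1) (Fin.snoc s q) := by
              intro q; rw [hcast q, if_pos hsp]
            rw [Finset.sum_congr rfl fun q _ => this q]
            exact mu_sum_snoc hX0 hX1 s
          · rename_i hsp
            apply Finset.sum_eq_zero
            intro q _
            rw [hcast q, if_neg hsp]
        rw [Finset.sum_congr rfl fun s _ => hterm s]
        exact ih i (Nat.le_of_lt_succ h) p
      · -- i = k+1 : last coordinate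
        have hik : i = k + 1 := le_antisymm hi h
        subst hik
        have heq : (⟨k+1, Nat.lt_succ_of_le hi⟩ : Fin (k+2)) = Fin.last (k+1) := rfl
        rw [Finset.sum_congr rfl fun s (_ : s ∈ Finset.univ) => by rw [heq]]
        exact mu_last hX0 hX1 _ p

/-- Diagonal pair marginal at consecutive coordinates. -/
lemma mu_pair (k : ℕ) : ∀ (i : ℕ) (hik : i < k) (p : P),
    ∑ s : Fin (k+1) → P,
      (if s ⟨i, Nat.lt_succ_of_lt hik⟩ = p ∧ s ⟨i+1, Nat.succ_lt_succ hik⟩ = p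
        then mu X k s else 0)
      = min (X i p) (X (i+1) p) := by
  induction k with
  | zero => intro i hik; omega
  | succ k ih =>
      intro i hik p
      rcases Nat.lt_or_ge i k with h | h
      · -- i + 1 ≤ k : truncate
        rw [sum_snoc_eq]
        have hterm : ∀ s : Fin (k+1) → P,
            (∑ q : P, if (Fin.snoc s q : Fin (k+2) → P) ⟨i, Nat.lt_succ_of_lt hik⟩ = p
                  ∧ (Fin.snoc s q : Fin (k+2) → P) ⟨i+1, Nat.succ_lt_succ hik⟩ = p
                then mu X (k+1) (Fin.snoc s q) else 0)
            = (if s ⟨i, Nat.lt_succ_of_lt h⟩ = p ∧ s ⟨i+1, Nat.succ_lt_succ h⟩ = p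
                then mu X k s else 0) := by
          intro s
          have hc1 : ∀ q : P, (Fin.snoc s q : Fin (k+2) → P) ⟨i, Nat.lt_succ_of_lt hik⟩
              = s ⟨i, Nat.lt_succ_of_lt h⟩ := by
            intro q
            have : (⟨i, Nat.lt_succ_of_lt hik⟩ : Fin (k+2))
                = Fin.castSucc ⟨i, Nat.lt_succ_of_lt h⟩ := rfl
            rw [this, Fin.snoc_castSucc]
          have hc2 : ∀ q : P, (Fin.snoc s q : Fin (k+2) → P) ⟨i+1, Nat.succ_lt_succ hik⟩
              = s ⟨i+1, Nat.succ_lt_succ h⟩ := by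
            intro q
            have : (⟨i+1, Nat.succ_lt_succ hik⟩ : Fin (k+2))
                = Fin.castSucc ⟨i+1, Nat.succ_lt_succ h⟩ := rfl
            rw [this, Fin.snoc_castSucc]
          split
          · rename_i hsp
            have : ∀ q : P, (if (Fin.snoc s q : Fin (k+2) → P) ⟨i, Nat.lt_succ_of_lt hik⟩ = p
                  ∧ (Fin.snoc s q : Fin (k+2) → P) ⟨i+1, Nat.succ_lt_succ hik⟩ = p
                then mu X (k+1) (Fin.snoc s q) else 0) = mu X (k+1) (Fin.snoc s q) := by
              intro q; rw [hc1 q, hc2 q, if_pos hsp]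
            rw [Finset.sum_congr rfl fun q _ => this q]
            exact mu_sum_snoc hX0 hX1 s
          · rename_i hsp
            apply Finset.sum_eq_zero
            intro q _
            rw [hc1 q, hc2 q, if_neg hsp]
        rw [Finset.sum_congr rfl fun s _ => hterm s]
        exact ih i h p
      · -- i = k : last two coordinates
        have hik' : i = k := by omega
        subst hik'
        rw [sum_snoc_eq]
        have hterm : ∀ s : Fin (i+1) → P,
            (∑ q : P, if (Fin.snoc s q : Fin (i+2) → P) ⟨i, Nat.lt_succ_of_lt hik⟩ = p
                  ∧ (Fin.snoc s q : Fin (i+2) → P) ⟨i+1, Nat.succ_lt_succ hik⟩ = p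
                then mu X (i+1) (Fin.snoc s q) else 0)
            = (if s (Fin.last i) = p then mu X i s else 0)
                * (gam (X i) (X (i+1)) p p / X i p) := by
          intro s
          have hc1 : ∀ q : P, (Fin.snoc s q : Fin (i+2) → P) ⟨i, Nat.lt_succ_of_lt hik⟩
              = s (Fin.last i) := by
            intro q
            have : (⟨i, Nat.lt_succ_of_lt hik⟩ : Fin (i+2))
                = Fin.castSucc (Fin.last i) := rfl
            rw [this, Fin.snoc_castSucc]
          have hc2 : ∀ q : P, (Fin.snoc s q : Fin (i+2) → P) ⟨i+1, Nat.succ_lt_succ hik⟩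
              = q := by
            intro q
            have : (⟨i+1, Nat.succ_lt_succ hik⟩ : Fin (i+2)) = Fin.last (i+1) := rfl
            rw [this, Fin.snoc_last]
          have hmu : ∀ q : P, mu X (i+1) (Fin.snoc s q)
              = mu X i s * (gam (X i) (X (i+1)) (s (Fin.last i)) q / X i (s (Fin.last i))) :=
            fun q => mu_snoc s q
          rcases eq_or_ne (s (Fin.last i)) p with hsp | hsp
          · have : ∀ q : P, (if (Fin.snoc s q : Fin (i+2) → P) ⟨i, Nat.lt_succ_of_lt hik⟩ = p
                  ∧ (Fin.snoc s q : Fin (i+2) → P) ⟨i+1, Nat.succ_lt_succ hik⟩ = p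
                then mu X (i+1) (Fin.snoc s q) else 0)
                = (if q = p then mu X i s * (gam (X i) (X (i+1)) p p / X i p) else 0) := by
              intro q
              rw [hc1 q, hc2 q, hmu q, hsp]
              by_cases hq : q = p
              · rw [if_pos ⟨rfl, hq⟩, if_pos hq, hq]
              · rw [if_neg (fun hh => hq hh.2), if_neg hq]
            rw [Finset.sum_congr rfl fun q _ => this q,
              Finset.sum_ite_eq' Finset.univ p
                (fun _ => mu X i s * (gam (X i) (X (i+1)) p p / X i p))]
            rw [if_pos (Finset.mem_univ p), if_pos hsp]
          · rw [if_neg hsp, zero_mul]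
            apply Finset.sum_eq_zero
            intro q _
            rw [hc1 q, if_neg (fun hh => hsp hh.1)]
        rw [Finset.sum_congr rfl fun s _ => hterm s, ← Finset.sum_mul,
          mu_last hX0 hX1 i p]
        rcases eq_or_ne (X i p) 0 with h0 | h0
        · rw [h0, zero_mul, eq_comm]
          have := hX0 (i+1) p
          rw [min_eq_left (by linarith)]
        · rw [mul_div_assoc' , mul_comm, mul_div_assoc, div_self h0, mul_one]
          show gam (X i) (X (i+1)) p p = _
          unfold gam
          simp

/-- Change probability at consecutive coordinates. -/
lemma mu_change (k : ℕ) (i : ℕ) (hik : i < k) (p : P) :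
    ∑ s : Fin (k+1) → P,
      (if s ⟨i+1, Nat.succ_lt_succ hik⟩ = p ∧ s ⟨i, Nat.lt_succ_of_lt hik⟩ ≠ p
        then mu X k s else 0)
      = max 0 (X (i+1) p - X i p) := by
  have hsplit : ∀ s : Fin (k+1) → P,
      (if s ⟨i+1, Nat.succ_lt_succ hik⟩ = p then mu X k s else 0)
      = (if s ⟨i, Nat.lt_succ_of_lt hik⟩ = p ∧ s ⟨i+1, Nat.succ_lt_succ hik⟩ = p
          then mu X k s else 0)
        + (if s ⟨i+1, Nat.succ_lt_succ hik⟩ = p ∧ s ⟨i, Nat.lt_succ_of_lt hik⟩ ≠ p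
          then mu X k s else 0) := by
    intro s
    by_cases h1 : s ⟨i+1, Nat.succ_lt_succ hik⟩ = p
    · by_cases h2 : s ⟨i, Nat.lt_succ_of_lt hik⟩ = p
      · rw [if_pos h1, if_pos ⟨h2, h1⟩, if_neg (fun hh => hh.2 h2), add_zero]
      · rw [if_pos h1, if_neg (fun hh => h2 hh.1), if_pos ⟨h1, h2⟩, zero_add]
    · rw [if_neg h1, if_neg (fun hh => h1 hh.2), if_neg (fun hh => h1 hh.1), add_zero]
  have hm := mu_marg hX0 hX1 k (i+1) (Nat.succ_le_of_lt hik) p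
  rw [Finset.sum_congr rfl fun s _ => hsplit s, Finset.sum_add_distrib,
    mu_pair hX0 hX1 k i hik p] at hm
  have : ∑ s : Fin (k+1) → P,
      (if s ⟨i+1, Nat.succ_lt_succ hik⟩ = p ∧ s ⟨i, Nat.lt_succ_of_lt hik⟩ ≠ p
        then mu X k s else 0) = X (i+1) p - min (X i p) (X (i+1) p) := by linarith
  rw [this]
  rcases le_total (X i p) (X (i+1) p) with h | h
  · rw [min_eq_left h, max_eq_right (by linarith)]
  · rw [min_eq_right h, max_eq_left (by linarith), sub_self]

/-- Total mass one. -/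
lemma mu_total (k : ℕ) : ∑ s : Fin (k+1) → P, mu X k s = 1 := by
  have h : ∀ s : Fin (k+1) → P, mu X k s
      = ∑ p : P, (if s (Fin.last k) = p then mu X k s else 0) := by
    intro s
    rw [Finset.sum_ite_eq Finset.univ (s (Fin.last k)) (fun _ => mu X k s)]
    simp
  rw [Finset.sum_congr rfl fun s _ => h s, Finset.sum_comm]
  rw [Finset.sum_congr rfl fun p (_ : p ∈ Finset.univ) => mu_last hX0 hX1 k p]
  exact hX1 k

end Markov

section Ray
variable {E : Type*} [AddCommGroup E] [Module ℝ E]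

lemma conv_add_ray {S : Set E} {y e : E}
    (hy : y ∈ convexHull ℝ S) (hS : ∀ a ∈ S, ∀ M : ℕ, a + (M : ℝ) • e ∈ S)
    {d : ℝ} (hd : 0 ≤ d) : y + d • e ∈ convexHull ℝ S := by
  set M : ℕ := ⌈d⌉₊ + 1 with hM
  have hdM : d ≤ (M : ℝ) := by
    have h1 := Nat.le_ceil d
    have h2 : ((⌈d⌉₊ : ℝ)) ≤ ((M : ℝ)) := by rw [hM]; push_cast; linarith
    linarith
  have hMpos : (0 : ℝ) < (M : ℝ) := by
    rw [hM]; push_cast; positivity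
  have h2 : y + (M : ℝ) • e ∈ convexHull ℝ S := by
    have hsub : ((M : ℝ) • e) +ᵥ S ⊆ S := by
      rintro _ ⟨a, ha, rfl⟩
      simpa [vadd_eq_add, add_comm] using hS a ha M
    have hmem : y + (M : ℝ) • e ∈ ((M : ℝ) • e) +ᵥ convexHull ℝ S :=
      ⟨y, hy, by simp [vadd_eq_add, add_comm]⟩
    rw [← convexHull_vadd] at hmem
    exact convexHull_mono hsub hmem
  have hcvx := convex_convexHull ℝ S
  have key := hcvx hy h2 (a := 1 - d / M) (b := d / M)
    (by
      have : d / M ≤ 1 := (div_le_one hMpos).mpr hdM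
      linarith)
    (by positivity) (by ring)
  have heq : (1 - d / M) • y + (d / M) • (y + (M : ℝ) • e) = y + d • e := by
    rw [smul_add, ← add_assoc, ← add_smul, sub_add_cancel, one_smul, smul_smul,
      div_mul_cancel₀ _ (ne_of_gt hMpos)]
  rwa [heq] at key

lemma conv_add_multi {S : Set E} {ι : Type*} [DecidableEq ι]
    (e : ι → E) (hS : ∀ c, ∀ a ∈ S, ∀ M : ℕ, a + (M : ℝ) • e c ∈ S)
    (F : Finset ι) (d : ι → ℝ) (hd : ∀ c, 0 ≤ d c) :
    ∀ y, y ∈ convexHull ℝ S → y + ∑ c ∈ F, d c • e c ∈ convexHull ℝ S := by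
  induction F using Finset.induction with
  | empty => intro y hy; simpa using hy
  | @insert a F' hnotmem ih =>
      intro y hy
      rw [Finset.sum_insert hnotmem]
      have heq : y + (d a • e a + ∑ c ∈ F', d c • e c)
          = (y + ∑ c ∈ F', d c • e c) + d a • e a := by abel
      rw [heq]
      exact conv_add_ray (ih y hy) (hS a) (hd a)

end Ray

lemma Q1_convex (P : Type*) [Fintype P] (T : ℕ) : Convex ℝ (Q1 P T) := by
  rintro z1 ⟨h1a, h1b, h1c, h1d⟩ z2 ⟨h2a, h2b, h2c, h2d⟩ a b ha hb hab
  have hfst : ∀ t p, (a • z1 + b • z2).1 t p = a * z1.1 t p + b * z2.1 t p := by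
    intro t p
    simp [Prod.fst_add, Prod.smul_fst, Pi.add_apply, Pi.smul_apply, smul_eq_mul]
  have hsnd : ∀ t p, (a • z1 + b • z2).2 t p = a * z1.2 t p + b * z2.2 t p := by
    intro t p
    simp [Prod.snd_add, Prod.smul_snd, Pi.add_apply, Pi.smul_apply, smul_eq_mul]
  refine ⟨?_, ?_, ?_, ?_⟩
  · intro t p
    rw [hfst]
    constructor
    · have := (h1a t p).1; have := (h2a t p).1; positivity
    · nlinarith [(h1a t p).2, (h2a t p).2, (h1a t p).1, (h2a t p).1]
  · intro t p
    rw [hsnd]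
    have := h1b t p; have := h2b t p; positivity
  · intro t
    have : ∀ p : P, (a • z1 + b • z2).1 t p = a * z1.1 t p + b * z2.1 t p :=
      fun p => hfst t p
    rw [Finset.sum_congr rfl fun p _ => this p, Finset.sum_add_distrib,
      ← Finset.mul_sum, ← Finset.mul_sum, h1c t, h2c t]
    linarith
  · intro t p ht
    rw [hfst, hfst, hsnd]
    nlinarith [h1d t p ht, h2d t p ht]

theorem stmt12 {P : Type*} [Fintype P] [DecidableEq P] {T : ℕ} :
    (∀ z ∈ Q1 P T,
      (z.1, fun (t : Fin T) (p : P) =>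
          if 0 < t.1 then max 0 (z.1 t p - z.1 (fpred t) p) else 0) ∈ Q1 P T ∧
      (∀ n : Fin T → P → ℝ, (z.1, n) ∈ Q1 P T →
        ∀ (t : Fin T) (p : P), 0 < t.1 →
          max 0 (z.1 t p - z.1 (fpred t) p) ≤ n t p)) ∧
    Q1 P T = convexHull ℝ
      {z ∈ Q1 P T | (∀ t p, z.1 t p = 0 ∨ z.1 t p = 1) ∧
                    (∀ t p, ∃ m : ℕ, z.2 t p = (m : ℝ))} := by
  constructor
  · rintro z ⟨hx01, hn0, hsum, hcons⟩
    refine ⟨⟨hx01, ?_, hsum, ?_⟩, ?_⟩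
    · intro t p
      dsimp only
      split
      · exact le_max_left _ _
      · exact le_refl 0
    · intro t p ht
      dsimp only
      rw [if_pos ht]
      exact le_max_right _ _
    · rintro n ⟨hnx01, hnn0, hnsum, hncons⟩ t p ht
      exact max_le (hnn0 t p) (hncons t p ht)
  · set S : Set ((Fin T → P → ℝ) × (Fin T → P → ℝ)) :=
      {z ∈ Q1 P T | (∀ t p, z.1 t p = 0 ∨ z.1 t p = 1) ∧
                    (∀ t p, ∃ m : ℕ, z.2 t p = (m : ℝ))} with hS
    apply Set.Subset.antisymm
    · -- hard direction
      intro z hz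
      obtain ⟨hx01, hn0, hsum, hcons⟩ := hz
      rcases Nat.eq_zero_or_pos T with hT | hTpos
      · subst hT
        apply subset_convexHull
        exact ⟨⟨hx01, hn0, hsum, hcons⟩, fun t => t.elim0, fun t => t.elim0⟩
      · cases isEmpty_or_nonempty P with
        | inl hP =>
            exfalso
            have h1 := hsum ⟨0, hTpos⟩
            rw [Finset.univ_eq_empty, Finset.sum_empty] at h1
            norm_num at h1
        | inr hP =>
            obtain ⟨K, rfl⟩ : ∃ K, T = K + 1 := ⟨T - 1, by omega⟩
            -- marginals extended to ℕ
            set X : ℕ → P → ℝ :=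
              fun k => z.1 ⟨min k K, Nat.lt_succ_of_le (min_le_right k K)⟩ with hX
            have hX0 : ∀ k p, 0 ≤ X k p := fun k p => (hx01 _ p).1
            have hX1 : ∀ k, ∑ p, X k p = 1 := fun k => hsum _
            have hXt : ∀ t : Fin (K+1), X t.1 = z.1 t := by
              intro t
              show z.1 ⟨min t.1 K, Nat.lt_succ_of_le (min_le_right t.1 K)⟩ = z.1 t
              exact congrArg z.1
                (fin_mk_eq t _ (Nat.min_eq_left (Nat.le_of_lt_succ t.2)))
            set w : (Fin (K+1) → P) → ℝ := mu X K with hw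
            set pt : (Fin (K+1) → P) → ((Fin (K+1) → P → ℝ) × (Fin (K+1) → P → ℝ)) :=
              fun s => (fun t p => if s t = p then 1 else 0,
                fun t p => if 0 < t.1 ∧ s t = p ∧ s (fpred t) ≠ p then (1:ℝ) else 0) with hpt
            have hptS : ∀ s, pt s ∈ S := by
              intro s
              refine ⟨⟨?_, ?_, ?_, ?_⟩, ?_, ?_⟩
              · intro t p
                rw [hpt]
                dsimp only
                split <;> norm_num
              · intro t p
                rw [hpt]
                dsimp only
                split <;> norm_num
              · intro t
                rw [hpt]
                dsimp only
                rw [Finset.sum_ite_eq Finset.univ (s t) (fun _ => (1:ℝ))]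
                simp
              · intro t p ht
                rw [hpt]
                dsimp only
                by_cases h1 : s t = p <;> by_cases h2 : s (fpred t) = p <;>
                  simp [h1, h2, ht]
              · intro t p
                rw [hpt]
                dsimp only
                split
                · right; rfl
                · left; rfl
              · intro t p
                rw [hpt]
                dsimp only
                split
                · exact ⟨1, by norm_num⟩
                · exact ⟨0, by norm_num⟩
            have hw0 : ∀ s, 0 ≤ w s := mu_nonneg hX0 K
            have hwtot : ∑ s, w s = 1 := mu_total hX0 hX1 K
            have hxmarg : ∀ (t : Fin (K+1)) (p : P),
                ∑ s : Fin (K+1) → P, (if s t = p then w s else 0) = z.1 t p := by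
              intro t p
              have h2 := mu_marg hX0 hX1 K t.1 (Nat.le_of_lt_succ t.2) p
              rw [hXt t] at h2
              exact h2
            have hnmarg : ∀ (t : Fin (K+1)) (p : P), 0 < t.1 →
                ∑ s : Fin (K+1) → P,
                  (if s t = p ∧ s (fpred t) ≠ p then w s else 0)
                  = max 0 (z.1 t p - z.1 (fpred t) p) := by
              intro t p ht
              have hi : t.1 - 1 < K := by omega
              have h2 := mu_change hX0 hX1 K (t.1 - 1) hi p
              have e1 : (⟨t.1 - 1 + 1, Nat.succ_lt_succ hi⟩ : Fin (K+1)) = t := by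
                apply Fin.ext
                show t.1 - 1 + 1 = t.1
                omega
              have e2 : (⟨t.1 - 1, Nat.lt_succ_of_lt hi⟩ : Fin (K+1)) = fpred t :=
                Fin.ext rfl
              rw [e1, e2] at h2
              have e4 : X (t.1 - 1) = z.1 (fpred t) := by
                show z.1 ⟨min (t.1 - 1) K, Nat.lt_succ_of_le (min_le_right _ K)⟩
                  = z.1 (fpred t)
                exact congrArg z.1
                  (fin_mk_eq (fpred t) _ (Nat.min_eq_left (by omega)))
              have e5 : X (t.1 - 1 + 1) = z.1 t := by
                have : t.1 - 1 + 1 = t.1 := by omega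
                rw [this]; exact hXt t
              rw [e4, e5] at h2
              exact h2
            -- the base point (z.1, c)
            set c : Fin (K+1) → P → ℝ :=
              fun t p => if 0 < t.1 then max 0 (z.1 t p - z.1 (fpred t) p) else 0 with hc
            have hcm : Finset.univ.centerMass w pt = (z.1, c) := by
              rw [Finset.centerMass_eq_of_sum_1 _ _ hwtot]
              apply Prod.ext
              · rw [Prod.fst_sum]
                funext t p
                simp only [Prod.smul_fst, Finset.sum_apply, Pi.smul_apply, hpt,
                  smul_eq_mul, mul_ite, mul_one, mul_zero]
                exact hxmarg t p
              · rw [Prod.snd_sum]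
                funext t p
                simp only [Prod.smul_snd, Finset.sum_apply, Pi.smul_apply, hpt,
                  smul_eq_mul, mul_ite, mul_one, mul_zero]
                rw [hc]
                by_cases ht : 0 < t.1
                · simp only [ht, true_and, if_true]
                  exact hnmarg t p ht
                · simp only [ht, false_and, if_false]
                  simp
            have hbase : (z.1, c) ∈ convexHull ℝ S := by
              rw [← hcm]
              exact Finset.centerMass_mem_convexHull _ (fun s _ => hw0 s)
                (by rw [hwtot]; norm_num) (fun s _ => hptS s)
            set Evec : (Fin (K+1) × P) → ((Fin (K+1) → P → ℝ) × (Fin (K+1) → P → ℝ)) :=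
              fun cp => (0, fun t p => if t = cp.1 ∧ p = cp.2 then (1:ℝ) else 0) with hE
            have hSclosed : ∀ cp, ∀ a ∈ S, ∀ M : ℕ, a + (M:ℝ) • Evec cp ∈ S := by
              rintro cp a ⟨⟨ha01, han0, hasum, hacons⟩, haint, hanat⟩ M
              have hfst : (a + (M:ℝ) • Evec cp).1 = a.1 := by
                rw [hE]
                simp
              have hsnd : ∀ t p, (a + (M:ℝ) • Evec cp).2 t p
                  = a.2 t p + (M:ℝ) * (if t = cp.1 ∧ p = cp.2 then (1:ℝ) else 0) := by
                intro t p
                rw [hE]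
                simp
              have hind : ∀ (t : Fin (K+1)) (p : P),
                  (0:ℝ) ≤ (M:ℝ) * (if t = cp.1 ∧ p = cp.2 then (1:ℝ) else 0) := by
                intro t p
                have : (0:ℝ) ≤ (if t = cp.1 ∧ p = cp.2 then (1:ℝ) else 0) := by
                  split <;> norm_num
                positivity
              refine ⟨⟨?_, ?_, ?_, ?_⟩, ?_, ?_⟩
              · intro t p
                rw [hfst]
                exact ha01 t p
              · intro t p
                rw [hsnd]
                have := han0 t p
                have := hind t p
                linarith
              · intro t
                rw [hfst]
                exact hasum t
              · intro t p ht
                rw [hfst, hsnd]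
                have := hacons t p ht
                have := hind t p
                linarith
              · intro t p
                rw [hfst]
                exact haint t p
              · intro t p
                obtain ⟨m, hm⟩ := hanat t p
                rw [hsnd, hm]
                by_cases h : t = cp.1 ∧ p = cp.2
                · exact ⟨m + M, by rw [if_pos h]; push_cast; ring⟩
                · exact ⟨m, by rw [if_neg h]; simp⟩
            have hd : ∀ cp : Fin (K+1) × P, 0 ≤ z.2 cp.1 cp.2 - c cp.1 cp.2 := by
              intro cp
              rw [hc]
              dsimp only
              split
              · rename_i ht
                have h1 := hcons cp.1 cp.2 ht
                have h2 := hn0 cp.1 cp.2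
                have : max 0 (z.1 cp.1 cp.2 - z.1 (fpred cp.1) cp.2) ≤ z.2 cp.1 cp.2 :=
                  max_le h2 h1
                linarith
              · have := hn0 cp.1 cp.2
                linarith
            have hzeq : z = (z.1, c) + ∑ cp : Fin (K+1) × P,
                (z.2 cp.1 cp.2 - c cp.1 cp.2) • Evec cp := by
              apply Prod.ext
              · rw [Prod.fst_add, Prod.fst_sum]
                simp [hE]
              · rw [Prod.snd_add, Prod.snd_sum]
                funext t p
                simp only [Pi.add_apply, Finset.sum_apply, hE, Prod.smul_snd,
                  Pi.smul_apply, smul_eq_mul, mul_ite, mul_one, mul_zero]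
                have hiff : ∀ cp : Fin (K+1) × P, (t = cp.1 ∧ p = cp.2) ↔ ((t,p) = cp) := by
                  intro cp
                  constructor
                  · rintro ⟨h1, h2⟩
                    exact Prod.ext h1 h2
                  · rintro rfl
                    exact ⟨rfl, rfl⟩
                rw [Finset.sum_congr rfl fun cp (_ : cp ∈ Finset.univ) => by
                  rw [if_congr (hiff cp) rfl rfl]]
                rw [Finset.sum_ite_eq Finset.univ ((t,p) : Fin (K+1) × P)
                  (fun cp => z.2 cp.1 cp.2 - c cp.1 cp.2)]
                simp
            rw [hzeq]
            exact conv_add_multi Evec hSclosed Finset.univ _ hd (z.1, c) hbase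
    · exact convexHull_min (fun z hz => hz.1) (Q1_convex P T)
end
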